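/- For every H ∈ (0,1), the series ∑_{k=1}^∞ ρ_H(k)² converges, where ρ_H(k) := (1/2)(|k+1|^H + |k−1|^H − 2|k|^H). -/
import Mathlib
set_option maxHeartbeats 1000000


/-- The covariance sequence `ρ_H(k) = (1/2)(|k+1|^H + |k−1|^H − 2|k|^H)`. -/
noncomputable def rhoH (H : ℝ) (k : ℤ) : ℝ :=
  (1 / 2) * (|(k : ℝ) + 1| ^ H + |(k : ℝ) - 1| ^ H - 2 * |(k : ℝ)| ^ H)

/-- For every `H ∈ (0,1)`, the series `∑_{k=1}^∞ ρ_H(k)²` converges. -/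
theorem stmt15 (H : ℝ) (hH0 : 0 < H) (hH1 : H < 1) :
    Summable (fun k : ℕ => (rhoH H (k + 1)) ^ 2) := by
  set g : ℕ → ℝ := fun n => ((n : ℝ) + 1) ^ H - (n : ℝ) ^ H with hgdef
  set a : ℕ → ℝ := fun n => g n - g (n + 1) with hadef
  have hgnonneg : ∀ n, 0 ≤ g n := by
    intro n
    have : (n : ℝ) ^ H ≤ ((n : ℝ) + 1) ^ H :=
      Real.rpow_le_rpow (Nat.cast_nonneg n) (by linarith) hH0.le
    simpa [hgdef] using sub_nonneg.2 this
  -- concavity of x ^ H gives a n ≥ 0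
  have hanonneg : ∀ n, 0 ≤ a n := by
    intro n
    have hcc := (Real.strictConcaveOn_rpow hH0 hH1).concaveOn
    have h := hcc.2 (Set.mem_Ici.2 (Nat.cast_nonneg n))
      (Set.mem_Ici.2 (by positivity : (0:ℝ) ≤ (n : ℝ) + 2))
      (by norm_num : (0:ℝ) ≤ (1:ℝ)/2) (by norm_num : (0:ℝ) ≤ (1:ℝ)/2) (by norm_num)
    simp only [smul_eq_mul] at h
    have hmid : (1:ℝ)/2 * (n : ℝ) + 1/2 * ((n : ℝ) + 2) = (n : ℝ) + 1 := by ring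
    rw [hmid] at h
    have : (n : ℝ) ^ H + ((n : ℝ) + 2) ^ H ≤ 2 * ((n : ℝ) + 1) ^ H := by linarith
    simp only [hadef, hgdef, Nat.cast_add, Nat.cast_one]
    have : ((n : ℝ) + 1 + 1) = (n : ℝ) + 2 := by ring
    rw [this]
    linarith
  have hg0 : g 0 = 1 := by
    simp [hgdef, Real.zero_rpow hH0.ne', Real.one_rpow]
  have hSa : Summable a := by
    apply summable_of_sum_range_le hanonneg (c := 1)
    intro n
    rw [hadef]
    rw [Finset.sum_range_sub' g]
    have := hgnonneg n
    linarith [hg0]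
  have hkey : ∀ n : ℕ, rhoH H ((n : ℤ) + 1) = -(1/2) * a n := by
    intro n
    have h1 : |((((n : ℤ) + 1 : ℤ)) : ℝ) + 1| = (n : ℝ) + 2 := by
      push_cast; rw [abs_of_nonneg]; · ring
      · positivity
    have h2 : |((((n : ℤ) + 1 : ℤ)) : ℝ) - 1| = (n : ℝ) := by
      push_cast
      have : ((n : ℝ) + 1) - 1 = (n : ℝ) := by ring
      rw [this, abs_of_nonneg (Nat.cast_nonneg n)]
    have h3 : |((((n : ℤ) + 1 : ℤ)) : ℝ)| = (n : ℝ) + 1 := by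
      push_cast; rw [abs_of_nonneg (by positivity)]
    rw [rhoH, h1, h2, h3]
    simp only [hadef, hgdef, Nat.cast_add, Nat.cast_one]
    have : ((n : ℝ) + 1 + 1) = (n : ℝ) + 2 := by ring
    rw [this]
    ring
  have hale : ∀ n, a n ≤ 1 := by
    intro n
    have h1 : g (n + 1) ≥ 0 := hgnonneg _
    have h2 : g n ≤ g 0 := by
      have : Antitone g := antitone_nat_of_succ_le fun m => by
        have := hanonneg m; simp only [hadef] at this; linarith
      exact this (Nat.zero_le n)
    simp only [hadef]; linarith [hg0]
  refine Summable.of_nonneg_of_le (fun n => sq_nonneg _) (fun n => ?_)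
    (hSa.mul_left (1/4 : ℝ))
  rw [hkey n]
  have h0 := hanonneg n
  have h1 := hale n
  have e : (-(1/2) * a n) ^ 2 = 1/4 * (a n * a n) := by ring
  rw [e]
  have h2 : a n * a n ≤ 1 * a n := mul_le_mul_of_nonneg_right h1 h0
  have h3 := mul_le_mul_of_nonneg_left h2 (by norm_num : (0:ℝ) ≤ 1/4)
  rw [one_mul] at h3
  exact h3
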